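/- arXiv:1106.2337 — 2 statements merged into one kernel-verified Lean document; each statement's English description precedes it below -/
import Mathlib

section
/- Let a_{0,0},a_{0,1},a_{0,2},a_{0,3},a_{1,1},a_{1,2},a_{2,1},a_{2,2},a_{3,1} be nonnegative reals and let K_0 = Σ_{i=0}^3 a_{0,i} e_i e_i*, K_1 = a_{1,1} e_0 e_1* + a_{1,2} e_2 e_3*, K_2 = a_{2,1} e_0 e_2* + a_{2,2} e_1 e_3*, K_3 = a_{3,1} e_0 e_3* in M_4(ℂ). Define K'_0 = a_{0,0} e_0 e_0* + a_{1,1} e_1 e_1* + a_{2,1} e_2 e_2* + a_{3,1} e_3 e_3*, K'_1 = a_{0,1} e_0 e_1* + a_{2,2} e_2 e_3*, K'_2 = a_{0,2} e_0 e_2* + a_{1,2} e_1 e_3*, K'_3 = a_{0,3} e_0 e_3*. Then for every ρ ∈ M_4(ℂ), the 4×4 matrix whose (j,k) entry is tr(K_j ρ K_k†) equals Σ_{μ=0}^3 K'_μ ρ K'_μ†. In particular, the complementary channel of a map with Kraus operators of this structural form again has Kraus operators of the same structural form. -/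
open Matrix

/-- The Kraus operators `K_0, K_1, K_2, K_3` of the structural form (krausform). -/
noncomputable def Kop (a00 a01 a02 a03 a11 a12 a21 a22 a31 : ℝ) :
    Fin 4 → Matrix (Fin 4) (Fin 4) ℂ
  | 0 => Matrix.single 0 0 (a00 : ℂ) + Matrix.single 1 1 (a01 : ℂ)
        + Matrix.single 2 2 (a02 : ℂ) + Matrix.single 3 3 (a03 : ℂ)
  | 1 => Matrix.single 0 1 (a11 : ℂ) + Matrix.single 2 3 (a12 : ℂ)
  | 2 => Matrix.single 0 2 (a21 : ℂ) + Matrix.single 1 3 (a22 : ℂ)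
  | 3 => Matrix.single 0 3 (a31 : ℂ)

/-- The Kraus operators `K'_0, K'_1, K'_2, K'_3` of the complementary channel. -/
noncomputable def Kop' (a00 a01 a02 a03 a11 a12 a21 a22 a31 : ℝ) :
    Fin 4 → Matrix (Fin 4) (Fin 4) ℂ
  | 0 => Matrix.single 0 0 (a00 : ℂ) + Matrix.single 1 1 (a11 : ℂ)
        + Matrix.single 2 2 (a21 : ℂ) + Matrix.single 3 3 (a31 : ℂ)
  | 1 => Matrix.single 0 1 (a01 : ℂ) + Matrix.single 2 3 (a22 : ℂ)
  | 2 => Matrix.single 0 2 (a02 : ℂ) + Matrix.single 1 3 (a12 : ℂ)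
  | 3 => Matrix.single 0 3 (a03 : ℂ)

/-!
For any Kraus family `K_j : ℂⁿ → ℂᵐ`, the complementary channel has the Kraus operators
`K'_μ` with entries `K'_μ[j, s] = K_j[μ, s]`: the Kraus index and the output index swap roles,
since `tr(K_j ρ K_k†) = ∑_μ ∑_{s,t} K_j[μ,s] ρ[s,t] conj K_k[μ,t]`. For the structured family,
this swap turns `K_0, …, K_3` into `K'_0, …, K'_3`.
-/

namespace Matrix

variable {ι m n R : Type*} [Fintype m] [Fintype n] [NonUnitalNonAssocSemiring R] [Star R]

def complementaryChannel (K : ι → Matrix m n R) (ρ : Matrix n n R) : Matrix ι ι R :=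
  of fun j k => (K j * ρ * (K k)ᴴ).trace

def complementaryKraus (K : ι → Matrix m n R) (μ : m) : Matrix ι n R :=
  of fun j s => K j μ s

theorem complementaryChannel_eq_sum (K : ι → Matrix m n R) (ρ : Matrix n n R) :
    complementaryChannel K ρ =
      ∑ μ, complementaryKraus K μ * ρ * (complementaryKraus K μ)ᴴ := by
  ext j k
  simp only [complementaryChannel, complementaryKraus, of_apply, trace, diag_apply, sum_apply,
    mul_apply, conjTranspose_apply]

end Matrix

theorem complementaryKraus_Kop (a00 a01 a02 a03 a11 a12 a21 a22 a31 : ℝ) :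
    complementaryKraus (Kop a00 a01 a02 a03 a11 a12 a21 a22 a31) =
      Kop' a00 a01 a02 a03 a11 a12 a21 a22 a31 := by
  ext μ j s
  fin_cases μ <;> fin_cases j <;> fin_cases s <;>
    simp [complementaryKraus, Kop, Kop']

theorem complementary_of_structured_kraus_general
    (a00 a01 a02 a03 a11 a12 a21 a22 a31 : ℝ)
    (ρ : Matrix (Fin 4) (Fin 4) ℂ) :
    (Matrix.of fun (j k : Fin 4) =>
        (Kop a00 a01 a02 a03 a11 a12 a21 a22 a31 j * ρ *
          (Kop a00 a01 a02 a03 a11 a12 a21 a22 a31 k)ᴴ).trace)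
      = ∑ μ : Fin 4, Kop' a00 a01 a02 a03 a11 a12 a21 a22 a31 μ * ρ *
          (Kop' a00 a01 a02 a03 a11 a12 a21 a22 a31 μ)ᴴ := by
  rw [← complementaryKraus_Kop]
  exact complementaryChannel_eq_sum _ ρ

/-- The complementary channel `ρ ↦ [tr(K_j ρ K_k†)]_{j,k}` of a channel with
Kraus operators of the structural form (krausform) has Kraus operators `K'_μ` of the same
structural form. -/
theorem complementary_of_structured_kraus
    (a00 a01 a02 a03 a11 a12 a21 a22 a31 : ℝ)
    (h00 : 0 ≤ a00) (h01 : 0 ≤ a01) (h02 : 0 ≤ a02) (h03 : 0 ≤ a03)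
    (h11 : 0 ≤ a11) (h12 : 0 ≤ a12) (h21 : 0 ≤ a21) (h22 : 0 ≤ a22) (h31 : 0 ≤ a31)
    (ρ : Matrix (Fin 4) (Fin 4) ℂ) :
    (Matrix.of fun (j k : Fin 4) =>
        (Kop a00 a01 a02 a03 a11 a12 a21 a22 a31 j * ρ *
          (Kop a00 a01 a02 a03 a11 a12 a21 a22 a31 k)ᴴ).trace)
      = ∑ μ : Fin 4, Kop' a00 a01 a02 a03 a11 a12 a21 a22 a31 μ * ρ *
          (Kop' a00 a01 a02 a03 a11 a12 a21 a22 a31 μ)ᴴ :=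
  complementary_of_structured_kraus_general a00 a01 a02 a03 a11 a12 a21 a22 a31 ρ
end

section
/- Let N(ρ) = Σ_k A_k ρ A_k† be a map on 2^m × 2^m complex matrices given by a finite Kraus family. For each label v = (a,b) with a,b : Fin m → ZMod 2, let W_v be the Kronecker product over i of X^{a(i)} Z^{b(i)}, so that W_v W_{v'} = ± W_{v+v'}. Define Ñ(ρ) := Σ_v 4^{−m} · W_v N(W_v ρ W_v†) W_v† ⊗ E_{v,v}, a matrix in M_{2^m}(ℂ) ⊗ M_{4^m}(ℂ) with the second factor indexed by the labels v, where E_{v,v} is the matrix unit. Then for every label u and every ρ: Ñ(W_u ρ W_u†) = (W_u ⊗ Π_u) Ñ(ρ) (W_u ⊗ Π_u)†, where Π_u is the permutation matrix on the label space sending basis vector e_v to e_{v+u}. -/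
open Matrix Kronecker

/-- The Pauli matrices `X` and `Z`. -/
noncomputable def pauliX : Matrix (Fin 2) (Fin 2) ℂ := !![0, 1; 1, 0]
noncomputable def pauliZ : Matrix (Fin 2) (Fin 2) ℂ := !![1, 0; 0, -1]

/-- Labels for the `m`-qubit Pauli group modulo phases: pairs `(a, b)` of `ZMod 2`-vectors. -/
abbrev PauliLabel (m : ℕ) := ((Fin m → ZMod 2) × (Fin m → ZMod 2))

/-- The Pauli-group representative `W_{(a,b)}`: the `m`-fold Kronecker product of
`X^{a(i)} Z^{b(i)}`. -/
noncomputable def Wlabel {m : ℕ} (v : PauliLabel m) :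
    Matrix (Fin m → Fin 2) (Fin m → Fin 2) ℂ :=
  Matrix.of fun c d => ∏ i, (pauliX ^ (v.1 i).val * pauliZ ^ (v.2 i).val) (c i) (d i)

/-- The channel `N(ρ) = Σ_k A_k ρ A_k†` given by a Kraus family. -/
noncomputable def Nch {m : ℕ} {ι : Type*} [Fintype ι]
    (A : ι → Matrix (Fin m → Fin 2) (Fin m → Fin 2) ℂ)
    (ρ : Matrix (Fin m → Fin 2) (Fin m → Fin 2) ℂ) :
    Matrix (Fin m → Fin 2) (Fin m → Fin 2) ℂ :=
  ∑ k, A k * ρ * (A k)ᴴ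

/-- The flagged twirled channel
`Ñ(ρ) = Σ_v 4^{−m} (W_v N(W_v ρ W_v†) W_v†) ⊗ E_{v,v}`. -/
noncomputable def Ntilde {m : ℕ} {ι : Type*} [Fintype ι]
    (A : ι → Matrix (Fin m → Fin 2) (Fin m → Fin 2) ℂ)
    (ρ : Matrix (Fin m → Fin 2) (Fin m → Fin 2) ℂ) :
    Matrix ((Fin m → Fin 2) × PauliLabel m) ((Fin m → Fin 2) × PauliLabel m) ℂ :=
  ∑ v : PauliLabel m, ((4 : ℂ) ^ m)⁻¹ •
    ((Wlabel v * Nch A (Wlabel v * ρ * (Wlabel v)ᴴ) * (Wlabel v)ᴴ) ⊗ₖ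
      Matrix.single v v 1)

/-- The permutation matrix `Π_u` on the label space sending `e_v` to `e_{v+u}`. -/
noncomputable def Pperm {m : ℕ} (u : PauliLabel m) : Matrix (PauliLabel m) (PauliLabel m) ℂ :=
  Matrix.of fun w v => if w = v + u then 1 else 0

/-!
Since `W_v W_w = ± W_{v+w}` and the sign cancels under conjugation, `W_v (W_u ρ W_u†) W_v†` is
the twirl of `ρ` by `W_{v+u}`: the `v`-th summand of `Ñ(W_u ρ W_u†)` feeds the channel the same
input as the `(v + u)`-th summand of `Ñ(ρ)`. Conjugating the latter by `W_u ⊗ Π_u` turns its outer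
`W_{v+u}` into `W_{u+v+u} = W_v` and its flag `E_{v+u,v+u}` into `E_{v,v}`, because `u + u = 0`.
Reindexing the sum by `v ↦ v + u` matches the two sides term by term.
-/

open Finset

def piKronecker {ι R : Type*} [Fintype ι] [CommMonoid R] {α β : ι → Type*}
    (M : ∀ i, Matrix (α i) (β i) R) : Matrix (∀ i, α i) (∀ i, β i) R :=
  of fun c d => ∏ i, M i (c i) (d i)

section piKronecker

variable {ι R : Type*} [Fintype ι] [CommSemiring R] {α β γ : ι → Type*}

theorem piKronecker_mul [DecidableEq ι] [∀ i, Fintype (β i)]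
    (M : ∀ i, Matrix (α i) (β i) R) (N : ∀ i, Matrix (β i) (γ i) R) :
    piKronecker M * piKronecker N = piKronecker fun i => M i * N i := by
  ext c d
  simp only [piKronecker, mul_apply, of_apply, ← prod_mul_distrib, Fintype.prod_sum]

theorem piKronecker_smul (r : ι → R) (M : ∀ i, Matrix (α i) (β i) R) :
    (piKronecker fun i => r i • M i) = (∏ i, r i) • piKronecker M := by
  ext c d
  simp only [piKronecker, of_apply, Matrix.smul_apply, smul_eq_mul, prod_mul_distrib]

end piKronecker

theorem pow_val_add_of_mul_self_eq_one {M : Type*} [Monoid M] {x : M} (hx : x * x = 1)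
    (a b : ZMod 2) : x ^ (a + b).val = x ^ a.val * x ^ b.val := by
  rw [ZMod.val_add, ← pow_eq_pow_mod _ (by rwa [sq]), pow_add]

theorem pauliX_mul_self : pauliX * pauliX = 1 := by
  simp [pauliX, one_fin_two]

theorem pauliZ_mul_self : pauliZ * pauliZ = 1 := by
  simp [pauliZ, one_fin_two]

theorem pauliZ_mul_pauliX : pauliZ * pauliX = -(pauliX * pauliZ) := by
  simp [pauliX, pauliZ]

theorem pauliZ_pow_mul_pauliX_pow (b c : ZMod 2) :
    pauliZ ^ b.val * pauliX ^ c.val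
      = (-1 : ℂ) ^ (b.val * c.val) • (pauliX ^ c.val * pauliZ ^ b.val) := by
  have hb := b.val_lt
  have hc := c.val_lt
  interval_cases b.val <;> interval_cases c.val <;> simp [pauliZ_mul_pauliX]

theorem pauli_mul_pauli (a b c d : ZMod 2) :
    pauliX ^ a.val * pauliZ ^ b.val * (pauliX ^ c.val * pauliZ ^ d.val)
      = (-1 : ℂ) ^ (b.val * c.val) • (pauliX ^ (a + c).val * pauliZ ^ (b + d).val) := by
  rw [pow_val_add_of_mul_self_eq_one pauliX_mul_self,
    pow_val_add_of_mul_self_eq_one pauliZ_mul_self, mul_assoc, ← mul_assoc (pauliZ ^ b.val),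
    pauliZ_pow_mul_pauliX_pow]
  simp only [smul_mul_assoc, mul_smul_comm, mul_assoc]

theorem Wlabel_eq_piKronecker {m : ℕ} (v : PauliLabel m) :
    Wlabel v = piKronecker fun i => pauliX ^ (v.1 i).val * pauliZ ^ (v.2 i).val :=
  rfl

theorem Wlabel_mul {m : ℕ} (v w : PauliLabel m) :
    Wlabel v * Wlabel w = (-1 : ℂ) ^ (∑ i, (v.2 i).val * (w.1 i).val) • Wlabel (v + w) := by
  simp only [Wlabel_eq_piKronecker, piKronecker_mul, pauli_mul_pauli, piKronecker_smul,
    prod_pow_eq_pow_sum]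
  rfl

theorem smul_mul_mul_conjTranspose_smul {n R : Type*} [Fintype n] [CommSemiring R] [StarRing R]
    {c : R} (hc : c * star c = 1) (P ρ : Matrix n n R) :
    c • P * ρ * (c • P)ᴴ = P * ρ * Pᴴ := by
  rw [conjTranspose_smul, smul_mul_assoc, smul_mul_assoc, mul_smul_comm, smul_smul, hc, one_smul]

theorem Wlabel_conj_Wlabel_conj {m : ℕ} (v w : PauliLabel m)
    (ρ : Matrix (Fin m → Fin 2) (Fin m → Fin 2) ℂ) :
    Wlabel v * (Wlabel w * ρ * (Wlabel w)ᴴ) * (Wlabel v)ᴴ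
      = Wlabel (v + w) * ρ * (Wlabel (v + w))ᴴ := by
  have hsign : ∀ n : ℕ, (-1 : ℂ) ^ n * star ((-1 : ℂ) ^ n) = 1 := fun n => by
    rw [star_pow, star_neg, star_one, ← mul_pow, neg_one_mul, neg_neg, one_pow]
  calc _ = Wlabel v * Wlabel w * ρ * (Wlabel v * Wlabel w)ᴴ := by
        simp only [conjTranspose_mul, mul_assoc]
    _ = _ := by rw [Wlabel_mul, smul_mul_mul_conjTranspose_smul (hsign _)]

theorem Pperm_eq_toMatrix {m : ℕ} (u : PauliLabel m) :
    Pperm u = (Equiv.addRight u).symm.toPEquiv.toMatrix := by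
  ext w v
  simp [Pperm, PEquiv.toMatrix_apply, eq_add_neg_iff_add_eq, eq_comm]

theorem Pperm_conjTranspose {m : ℕ} (u : PauliLabel m) :
    (Pperm u)ᴴ = (Equiv.addRight u).toPEquiv.toMatrix := by
  ext w v
  simp [Pperm, PEquiv.toMatrix_apply, conjTranspose_apply, apply_ite star, eq_comm]

theorem Pperm_mul_mul_conjTranspose {m : ℕ} (u : PauliLabel m)
    (M : Matrix (PauliLabel m) (PauliLabel m) ℂ) :
    Pperm u * M * (Pperm u)ᴴ = M.submatrix (Equiv.addRight u).symm (Equiv.addRight u).symm := by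
  rw [Pperm_conjTranspose, Pperm_eq_toMatrix, PEquiv.toMatrix_toPEquiv_mul,
    PEquiv.mul_toMatrix_toPEquiv, submatrix_submatrix]
  rfl

theorem kronecker_mul_mul_conjTranspose {R l m n p : Type*} [CommSemiring R] [StarRing R]
    [Fintype l] [Fintype n] (A : Matrix m l R) (B : Matrix p n R) (X : Matrix l l R)
    (Y : Matrix n n R) :
    (A ⊗ₖ B) * (X ⊗ₖ Y) * (A ⊗ₖ B)ᴴ = (A * X * Aᴴ) ⊗ₖ (B * Y * Bᴴ) := by
  rw [conjTranspose_kronecker, ← mul_kronecker_mul, ← mul_kronecker_mul]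

/-- The flagged twirled channel `Ñ` satisfies, for every Pauli label `u`,
`Ñ(W_u ρ W_u†) = (W_u ⊗ Π_u) Ñ(ρ) (W_u ⊗ Π_u)†`. -/
theorem Ntilde_pauli_covariance (m : ℕ) (ι : Type*) [Fintype ι]
    (A : ι → Matrix (Fin m → Fin 2) (Fin m → Fin 2) ℂ)
    (u : PauliLabel m) (ρ : Matrix (Fin m → Fin 2) (Fin m → Fin 2) ℂ) :
    Ntilde A (Wlabel u * ρ * (Wlabel u)ᴴ)
      = (Wlabel u ⊗ₖ Pperm u) * Ntilde A ρ * (Wlabel u ⊗ₖ Pperm u)ᴴ := by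
  have hu : u + u = 0 := ZModModule.add_self u
  rw [Ntilde, Ntilde, mul_sum, sum_mul]
  refine (Fintype.sum_equiv (Equiv.addRight u) _ _ fun v => ?_).symm
  rw [mul_smul_comm, smul_mul_assoc, kronecker_mul_mul_conjTranspose, Pperm_mul_mul_conjTranspose,
    submatrix_single_equiv, Equiv.symm_symm, Wlabel_conj_Wlabel_conj, Wlabel_conj_Wlabel_conj]
  simp only [Equiv.coe_addRight, add_comm u, add_assoc, hu, add_zero]
end
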